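/- arXiv:2303.10586 — 2 statements merged into one kernel-verified Lean document; each statement's English description precedes it below -/
import Mathlib

section
/- Let R be a ring and let C be an additive symmetric monoidal category, i.e., a symmetric monoidal category enriched over commutative monoids (each hom-set has a sum + and zero map 0) such that composition and the monoidal product ⊗ preserve sums and zero maps. Suppose given a family of endofunctors !_r of C indexed by r ∈ R, a natural transformation w : !_0 A → I (I the monoidal unit), and a family of natural transformations ∂_r : !_r A ⊗ A → !_{r+1} A, where naturality of ∂ means (!_r(f) ⊗ f) ; ∂_r = ∂_r ; !_{r+1}(f) for every map f : A → B. Then the composite ∂_{-1} ; w : !_{-1} A ⊗ A → I is the zero map (the Constant Rule). -/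
open CategoryTheory MonoidalCategory

universe v u

/-- An additive symmetric monoidal category: homs are commutative monoids and
composition and the monoidal product preserve sums and zero maps. -/
class AdditiveMonoidal (C : Type u) [Category.{v} C] [MonoidalCategory C]
    [∀ X Y : C, AddCommMonoid (X ⟶ Y)] : Prop where
  add_comp : ∀ {X Y Z : C} (f g : X ⟶ Y) (h : Y ⟶ Z), (f + g) ≫ h = f ≫ h + g ≫ h
  comp_add : ∀ {X Y Z : C} (f : X ⟶ Y) (g h : Y ⟶ Z), f ≫ (g + h) = f ≫ g + f ≫ h
  zero_comp : ∀ {X Y Z : C} (g : Y ⟶ Z), (0 : X ⟶ Y) ≫ g = 0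
  comp_zero : ∀ {X Y Z : C} (f : X ⟶ Y), f ≫ (0 : Y ⟶ Z) = 0
  add_tensor : ∀ {X Y Z W : C} (f g : X ⟶ Y) (h : Z ⟶ W), (f + g) ⊗ₘ h = f ⊗ₘ h + g ⊗ₘ h
  tensor_add : ∀ {X Y Z W : C} (f : X ⟶ Y) (g h : Z ⟶ W), f ⊗ₘ (g + h) = f ⊗ₘ g + f ⊗ₘ h
  zero_tensor : ∀ {X Y Z W : C} (h : Z ⟶ W), (0 : X ⟶ Y) ⊗ₘ h = 0
  tensor_zero : ∀ {X Y Z W : C} (f : X ⟶ Y), f ⊗ₘ (0 : Z ⟶ W) = 0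

/-- The canonical identification `!_r A ⟶ !_s A` coming from an equality `r = s` of grades. -/
def bc {R : Type} {C : Type u} [Category.{v} C] (bang : R → C ⥤ C) {r s : R} (h : r = s)
    (A : C) : (bang r).obj A ⟶ (bang s).obj A :=
  eqToHom (congrArg (fun t => (bang t).obj A) h)

/-!
Naturality of `w` along the zero map `0 : A ⟶ A` gives `w = !_0(0) ; w`, and naturality of
`∂_{-1}` along the same map gives `∂_{-1} ; !_0(0) = (!_{-1}(0) ⊗ 0) ; ∂_{-1}`, which vanishes
because `⊗` preserves zero maps.
-/

lemma bc_comp_map {R : Type} {C : Type u} [Category.{v} C] (bang : R → C ⥤ C) {r s : R}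
    (h : r = s) {A B : C} (f : A ⟶ B) :
    bc bang h A ≫ (bang s).map f = (bang r).map f ≫ bc bang h B := by
  subst h
  simp only [bc, eqToHom_refl, Category.id_comp, Category.comp_id]

lemma comp_map_zero_eq_zero {R : Type} [Add R] [One R]
    {C : Type u} [Category.{v} C] [MonoidalCategory C]
    [∀ X Y : C, AddCommMonoid (X ⟶ Y)] [AdditiveMonoidal C]
    (bang : R → C ⥤ C) (D : ∀ (r : R) (A : C), (bang r).obj A ⊗ A ⟶ (bang (r + 1)).obj A)
    (D_natural : ∀ (r : R) {A B : C} (f : A ⟶ B),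
      ((bang r).map f ⊗ₘ f) ≫ D r B = D r A ≫ (bang (r + 1)).map f)
    (r : R) (A : C) :
    D r A ≫ (bang (r + 1)).map (0 : A ⟶ A) = 0 := by
  rw [← D_natural, AdditiveMonoidal.tensor_zero, AdditiveMonoidal.zero_comp]

/-- **The Constant Rule.** If `R` is a ring then, in an additive symmetric monoidal
category equipped with a family of endofunctors `!_r` indexed by `r ∈ R`, a natural
transformation `w : !_0 A ⟶ I` and a family of natural transformations
`∂_r : !_r A ⊗ A ⟶ !_{r+1} A`, the composite `∂_{-1} ; w : !_{-1} A ⊗ A ⟶ I`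
is the zero map. -/
theorem constant_rule
    {R : Type} [Ring R]
    {C : Type u} [Category.{v} C] [MonoidalCategory C] [SymmetricCategory C]
    [∀ X Y : C, AddCommMonoid (X ⟶ Y)] [AdditiveMonoidal C]
    (bang : R → C ⥤ C)
    (w : ∀ A : C, (bang 0).obj A ⟶ 𝟙_ C)
    (w_natural : ∀ {A B : C} (f : A ⟶ B), (bang 0).map f ≫ w B = w A)
    (D : ∀ (r : R) (A : C), (bang r).obj A ⊗ A ⟶ (bang (r + 1)).obj A)
    (D_natural : ∀ (r : R) {A B : C} (f : A ⟶ B),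
      ((bang r).map f ⊗ₘ f) ≫ D r B = D r A ≫ (bang (r + 1)).map f)
    (A : C) :
    D (-1) A ≫ bc bang (neg_add_cancel (1 : R)) A ≫ w A = 0 := by
  calc D (-1) A ≫ bc bang (neg_add_cancel (1 : R)) A ≫ w A
      = D (-1) A ≫ bc bang (neg_add_cancel (1 : R)) A ≫ (bang 0).map (0 : A ⟶ A) ≫ w A := by
        rw [w_natural]
    _ = (D (-1) A ≫ (bang (-1 + 1)).map (0 : A ⟶ A)) ≫ bc bang (neg_add_cancel (1 : R)) A ≫
          w A := by
        rw [← Category.assoc (bc bang _ A), bc_comp_map]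
        simp only [Category.assoc]
    _ = 0 := by
        rw [comp_map_zero_eq_zero bang D D_natural, AdditiveMonoidal.zero_comp]
end

section
/- Let X be a type and n ∈ ℕ, and write M_n X for the set of multisets over X of cardinality n. Define the relation ε_n ⊆ M_n X × (Fin n → X) by (m, x) ∈ ε_n iff m equals the multiset {x(0), …, x(n−1)} of values of x. For a permutation τ of Fin n, let τ̂ ⊆ (Fin n → X) × (Fin n → X) be its graph relation, (x, y) ∈ τ̂ iff y = x ∘ τ⁻¹. Then: (a) ε_n ; τ̂ = ε_n for every permutation τ (where (m,y) ∈ ε_n ; τ̂ iff there exists x with (m,x) ∈ ε_n and (x,y) ∈ τ̂); and (b) for every type Z and every relation S ⊆ Z × (Fin n → X) satisfying S ; τ̂ = S for all permutations τ of Fin n, there exists a unique relation T ⊆ Z × M_n X with T ; ε_n = S. -/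
/-- Composition of relations, written diagrammatically: `(a, c) ∈ S ; T` iff there is
`b` with `(a, b) ∈ S` and `(b, c) ∈ T`. -/
def relComp {A B C : Type*} (S : A → B → Prop) (T : B → C → Prop) : A → C → Prop :=
  fun a c => ∃ b, S a b ∧ T b c

/-- The relation `ε_n ⊆ M_n X × (Fin n → X)` relating a multiset of cardinality `n` to
each tuple enumerating it. -/
def epsRel (X : Type*) (n : ℕ) :
    {m : Multiset X // Multiset.card m = n} → (Fin n → X) → Prop :=
  fun m x => (m : Multiset X) = (List.ofFn x : Multiset X)

/-- The graph relation of the permutation `τ` acting on tuples: `(x, y) ∈ τ̂` iff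
`y = x ∘ τ⁻¹`. -/
def permRel {X : Type*} {n : ℕ} (τ : Equiv.Perm (Fin n)) :
    (Fin n → X) → (Fin n → X) → Prop :=
  fun x y => y = x ∘ ⇑τ⁻¹

/-!
The relation `ε_n` is the converse of the map `x ↦ {x 0, …, x (n-1)}` from tuples onto `M_n X`.
Because that map is single-valued and surjective, `T ; ε_n = S` forces `T = S ; ε_n°`, and
`S ; ε_n° ; ε_n = S` holds exactly when `S` is constant on the fibres of the map. These fibres are
the permutation orbits: two tuples with the same multiset of values have fibres `{i | x i = c}` of
equal size over every value `c`, and matching up the fibres gives a permutation of the indices.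
-/

theorem Fin.exists_perm_eq_comp_of_coe_ofFn_eq {X : Type*} {n : ℕ} {x y : Fin n → X}
    (h : (List.ofFn x : Multiset X) = List.ofFn y) : ∃ σ : Equiv.Perm (Fin n), x = y ∘ σ := by
  classical
  have hfiber : ∀ c, Fintype.card {i // x i = c} = Fintype.card {i // y i = c} := by
    intro c
    have hcount := congrArg (Multiset.count c) h
    rw [← Fin.univ_val_map, ← Fin.univ_val_map, Multiset.count_map, Multiset.count_map] at hcount
    simpa only [Fintype.card_subtype, Finset.card_def, Finset.filter_val, eq_comm] using hcount
  refine ⟨Equiv.ofFiberEquiv fun c => Fintype.equivOfCardEq (hfiber c), ?_⟩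
  funext i
  exact (Equiv.ofFiberEquiv_map _ i).symm

theorem Multiset.exists_coe_ofFn_eq {X : Type*} {n : ℕ} (m : Multiset X)
    (h : Multiset.card m = n) : ∃ x : Fin n → X, (List.ofFn x : Multiset X) = m := by
  obtain ⟨l⟩ := m
  subst h
  exact ⟨l.get, congrArg _ (List.ofFn_get l)⟩

section relComp

variable {A B C : Type*}

theorem relComp_relComp_flip_eq (S : A → C → Prop) (R : B → C → Prop)
    (hR : ∀ c, ∃ b, R b c) (hS : ∀ a b c c', R b c → R b c' → S a c → S a c') :
    relComp (relComp S (flip R)) R = S := by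
  funext a c
  refine propext ⟨?_, fun hac => ?_⟩
  · rintro ⟨b, ⟨c', hac', hbc'⟩, hbc⟩
    exact hS a b c' c hbc' hbc hac'
  · obtain ⟨b, hbc⟩ := hR c
    exact ⟨b, ⟨c, hac, hbc⟩, hbc⟩

theorem eq_relComp_flip_of_relComp_eq {S : A → C → Prop} {R : B → C → Prop} {T : A → B → Prop}
    (hR : ∀ b, ∃ c, R b c) (hR' : ∀ b b' c, R b c → R b' c → b = b')
    (hT : relComp T R = S) : T = relComp S (flip R) := by
  subst hT
  funext a b
  refine propext ⟨fun hab => ?_, ?_⟩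
  · obtain ⟨c, hbc⟩ := hR b
    exact ⟨c, ⟨b, hab, hbc⟩, hbc⟩
  · rintro ⟨c, ⟨b', hab', hb'c⟩, hbc⟩
    rwa [← hR' b' b c hb'c hbc]

end relComp

theorem relComp_permRel_iff {A X : Type*} {n : ℕ} (S : A → (Fin n → X) → Prop)
    (τ : Equiv.Perm (Fin n)) (a : A) (y : Fin n → X) :
    relComp S (permRel τ) a y ↔ S a (y ∘ τ) := by
  refine ⟨?_, fun h => ⟨y ∘ τ, h, ?_⟩⟩
  · rintro ⟨x, hx, rfl⟩
    simpa [Function.comp_assoc] using hx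
  · simp [permRel, Function.comp_assoc]

theorem relComp_epsRel_permRel (X : Type*) {n : ℕ} (τ : Equiv.Perm (Fin n)) :
    relComp (epsRel X n) (permRel τ) = epsRel X n := by
  funext m y
  rw [relComp_permRel_iff, epsRel, epsRel, Multiset.coe_eq_coe.2 (τ.ofFn_comp_perm y)]

theorem apply_of_coe_ofFn_eq_of_relComp_permRel_eq {A X : Type*} {n : ℕ}
    {S : A → (Fin n → X) → Prop} (hS : ∀ τ, relComp S (permRel τ) = S) {a : A}
    {x y : Fin n → X} (hxy : (List.ofFn x : Multiset X) = List.ofFn y) (hx : S a x) : S a y := by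
  obtain ⟨σ, rfl⟩ := Fin.exists_perm_eq_comp_of_coe_ofFn_eq hxy
  rw [← hS σ, relComp_permRel_iff]
  exact hx

theorem exists_epsRel_left {X : Type*} {n : ℕ} (x : Fin n → X) : ∃ m, epsRel X n m x :=
  ⟨⟨List.ofFn x, by simp⟩, rfl⟩

theorem exists_epsRel_right {X : Type*} {n : ℕ} (m : {m : Multiset X // Multiset.card m = n}) :
    ∃ x, epsRel X n m x :=
  (m.1.exists_coe_ofFn_eq m.2).imp fun _ hx => hx.symm

theorem epsRel_left_unique {X : Type*} {n : ℕ} {m m' : {m : Multiset X // Multiset.card m = n}}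
    {x : Fin n → X} (hm : epsRel X n m x) (hm' : epsRel X n m' x) : m = m' :=
  Subtype.ext (hm.trans hm'.symm)

/-- **Multisets of cardinality `n` are the `n`-th equalizer symmetric power in `Rel`.**
The relation `ε_n` equalizes all permutation relations on `X^n`, and every relation
`S ⊆ Z × X^n` equalizing all permutations factors uniquely through `ε_n`. -/
theorem multiset_equalizer_symmetric_power_in_Rel (X : Type*) (n : ℕ) :
    (∀ τ : Equiv.Perm (Fin n), relComp (epsRel X n) (permRel τ) = epsRel X n) ∧
    (∀ (Z : Type) (S : Z → (Fin n → X) → Prop),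
      (∀ τ : Equiv.Perm (Fin n), relComp S (permRel τ) = S) →
      ∃! T : Z → {m : Multiset X // Multiset.card m = n} → Prop,
        relComp T (epsRel X n) = S) := by
  refine ⟨relComp_epsRel_permRel X, fun Z S hS => ⟨relComp S (flip (epsRel X n)), ?_, ?_⟩⟩
  · refine relComp_relComp_flip_eq S _ exists_epsRel_left fun z m x y hx hy => ?_
    exact apply_of_coe_ofFn_eq_of_relComp_permRel_eq hS (hx.symm.trans hy)
  · exact fun T hT => eq_relComp_flip_of_relComp_eq exists_epsRel_right
      (fun _ _ _ => epsRel_left_unique) hT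
end
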